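/- arXiv:2210.13613 — 4 statements merged into one kernel-verified Lean document; each statement's English description precedes it below -/
import Mathlib

section
/- Let n > 1 be a positive integer and define S(n) to be the maximum over all k ≥ 1 and all tuples of positive integers (n_1,...,n_k) with n_1 + ... + n_k = n of the product n_1 · ... · n_k. Then: if n ≡ 0 (mod 3) then S(n) = 3^{n/3}; if n ≡ 1 (mod 3) then S(n) = 4 · 3^{(n-4)/3}; if n ≡ 2 (mod 3) then S(n) = 2 · 3^{(n-2)/3}. -/
/-! Let `f 1, …, f 4 = 1, 2, 3, 4` and `f (n + 3) = 3 f n` for `n ≥ 2`, so that `f n` is the product of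
the partition of `n` into threes together with a single `2` or `4` when `3 ∤ n`. Then
`a · f b ≤ f (a + b)` for every part `a ≥ 1`: for `a ≤ 4` by the recursion, for `a ≥ 5` by induction
since `a ≤ 3 (a - 3)`. Peeling off one part at a time bounds the product of every partition of `n`
by `f n`. -/

/-- The set of products `n₁ ⋯ n_k` over all nonempty tuples of positive integers
with sum `n`. -/
def PartProds (n : ℕ) : Set ℕ :=
  {p | ∃ l : List ℕ, l ≠ [] ∧ (∀ x ∈ l, 0 < x) ∧ l.sum = n ∧ l.prod = p}

def maxPartProd : ℕ → ℕ
  | 0 => 1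
  | 1 => 1
  | 2 => 2
  | 3 => 3
  | 4 => 4
  | n + 5 => 3 * maxPartProd (n + 2)

theorem maxPartProd_add_five (n : ℕ) : maxPartProd (n + 5) = 3 * maxPartProd (n + 2) := rfl

theorem maxPartProd_le_succ : ∀ n, maxPartProd n ≤ maxPartProd (n + 1)
  | 0 | 1 | 2 | 3 | 4 => by decide
  | n + 5 => Nat.mul_le_mul_left 3 (maxPartProd_le_succ (n + 2))

theorem two_mul_maxPartProd_le : ∀ n, 2 * maxPartProd n ≤ maxPartProd (n + 2)
  | 0 | 1 | 2 | 3 | 4 => by decide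
  | n + 5 =>
    (Nat.mul_left_comm 2 3 _).trans_le (Nat.mul_le_mul_left 3 (two_mul_maxPartProd_le (n + 2)))

theorem three_mul_maxPartProd_le : ∀ n, 3 * maxPartProd n ≤ maxPartProd (n + 3)
  | 0 | 1 => by decide
  | n + 2 => (maxPartProd_add_five n).ge

theorem mul_maxPartProd_le : ∀ a b, 0 < a → a * maxPartProd b ≤ maxPartProd (a + b)
  | 1, b, _ => by simpa [add_comm] using maxPartProd_le_succ b
  | 2, b, _ => by simpa [add_comm] using two_mul_maxPartProd_le b
  | 3, b, _ => by simpa [add_comm] using three_mul_maxPartProd_le b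
  | 4, b, _ => by
    have h₂ := two_mul_maxPartProd_le b
    have h₄ := two_mul_maxPartProd_le (b + 2)
    rw [show 4 + b = b + 2 + 2 by omega]
    omega
  | a + 5, b, _ =>
    calc (a + 5) * maxPartProd b ≤ 3 * ((a + 2) * maxPartProd b) := by nlinarith
      _ ≤ 3 * maxPartProd (a + 2 + b) :=
        Nat.mul_le_mul_left 3 (mul_maxPartProd_le (a + 2) b (by omega))
      _ ≤ maxPartProd (a + 5 + b) := by
        simpa [show a + 2 + b + 3 = a + 5 + b by omega] using three_mul_maxPartProd_le (a + 2 + b)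

theorem List.prod_le_maxPartProd_sum :
    ∀ l : List ℕ, (∀ x ∈ l, 0 < x) → l.prod ≤ maxPartProd l.sum
  | [], _ => le_rfl
  | a :: l, hpos => by
    rw [List.prod_cons, List.sum_cons]
    calc a * l.prod ≤ a * maxPartProd l.sum :=
          Nat.mul_le_mul_left a (l.prod_le_maxPartProd_sum fun x hx => hpos x (by simp [hx]))
      _ ≤ maxPartProd (a + l.sum) := mul_maxPartProd_le a l.sum (hpos a (by simp))

theorem self_mem_partProds {n : ℕ} (hn : 0 < n) : n ∈ PartProds n :=
  ⟨[n], by simp, by simpa using hn, by simp, by simp⟩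

theorem maxPartProd_mem_partProds : ∀ n, 0 < n → maxPartProd n ∈ PartProds n
  | 1, h | 2, h | 3, h | 4, h => self_mem_partProds h
  | n + 5, _ => by
    obtain ⟨l, -, hpos, hsum, hprod⟩ := maxPartProd_mem_partProds (n + 2) (by omega)
    refine ⟨3 :: l, by simp, ?_, by simp [hsum]; omega, by simp [hprod, maxPartProd_add_five]⟩
    simpa using hpos

theorem isGreatest_maxPartProd {n : ℕ} (hn : 0 < n) : IsGreatest (PartProds n) (maxPartProd n) :=
  ⟨maxPartProd_mem_partProds n hn, by
    rintro _ ⟨l, -, hpos, rfl, rfl⟩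
    exact l.prod_le_maxPartProd_sum hpos⟩

theorem maxPartProd_three_mul_add_three (k : ℕ) : maxPartProd (3 * k + 3) = 3 ^ (k + 1) := by
  induction k with
  | zero => rfl
  | succ k ih => rw [show 3 * (k + 1) + 3 = 3 * k + 1 + 5 by ring, maxPartProd_add_five,
      show 3 * k + 1 + 2 = 3 * k + 3 by ring, ih, pow_succ' 3 (k + 1)]

theorem maxPartProd_three_mul_add_four (k : ℕ) : maxPartProd (3 * k + 4) = 4 * 3 ^ k := by
  induction k with
  | zero => rfl
  | succ k ih => rw [show 3 * (k + 1) + 4 = 3 * k + 2 + 5 by ring, maxPartProd_add_five, ih]; ring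

theorem maxPartProd_three_mul_add_two (k : ℕ) : maxPartProd (3 * k + 2) = 2 * 3 ^ k := by
  induction k with
  | zero => rfl
  | succ k ih => rw [show 3 * (k + 1) + 2 = 3 * k + 5 by ring, maxPartProd_add_five, ih]; ring

theorem max_product_of_partition (n : ℕ) (hn : 1 < n) :
    (n % 3 = 0 → IsGreatest (PartProds n) (3 ^ (n / 3))) ∧
    (n % 3 = 1 → IsGreatest (PartProds n) (4 * 3 ^ ((n - 4) / 3))) ∧
    (n % 3 = 2 → IsGreatest (PartProds n) (2 * 3 ^ ((n - 2) / 3))) := by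
  have hmax := isGreatest_maxPartProd (n := n) (by omega)
  refine ⟨fun h => ?_, fun h => ?_, fun h => ?_⟩
  · obtain ⟨k, rfl⟩ : ∃ k, n = 3 * k + 3 := ⟨n / 3 - 1, by omega⟩
    rwa [show (3 * k + 3) / 3 = k + 1 by omega, ← maxPartProd_three_mul_add_three]
  · obtain ⟨k, rfl⟩ : ∃ k, n = 3 * k + 4 := ⟨(n - 4) / 3, by omega⟩
    rwa [show (3 * k + 4 - 4) / 3 = k by omega, ← maxPartProd_three_mul_add_four]
  · obtain ⟨k, rfl⟩ : ∃ k, n = 3 * k + 2 := ⟨(n - 2) / 3, by omega⟩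
    rwa [show (3 * k + 2 - 2) / 3 = k by omega, ← maxPartProd_three_mul_add_two]
end

section
/- In the Three Rows Game on n columns, any outcome o with |o| = n (i.e. the history never uses the middle row) arises from exactly one history. Formally: if h, h' ∈ {T,B}^n are two histories using only top and bottom squares, where the history h contributes the value i-1 for a top choice in column i and the value i for a bottom choice in column i (columns indexed 1,...,n), and h and h' yield the same multiset of values, then h = h'. -/
/-!
Instead of following the outcome label by label, count the chosen labels that are at most `c`:
every column before `c` contributes one, every column after `c` contributes none, and column `c`
contributes one exactly when its top square is chosen. These cumulative counts are determined by
the outcome, so they read off every column.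
-/

open Finset

theorem Finset.card_filter_le_eq_sum_card_filter_eq {α : Type*} [Fintype α] (f : α → ℕ) (m : ℕ) :
    #{x | f x ≤ m} = ∑ j ∈ range (m + 1), #{x | f x = j} := by
  rw [card_eq_sum_card_fiberwise (f := f) (t := range (m + 1))]
  · refine sum_congr rfl fun j hj => congrArg card ?_
    rw [filter_filter]
    exact filter_congr fun x _ =>
      ⟨And.right, fun hx => ⟨hx ▸ Nat.lt_succ_iff.mp (mem_range.mp hj), hx⟩⟩
  · intro x hx
    simpa [Nat.lt_succ_iff] using hx

namespace ThreeRows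

def label {n : ℕ} (g : Fin n → Bool) (c : Fin n) : ℕ := if g c then (c : ℕ) + 1 else c

theorem label_le_iff {n : ℕ} (g : Fin n → Bool) (c d : Fin n) :
    label g d ≤ c ↔ d < c ∨ (d = c ∧ g c = false) := by
  rcases eq_or_ne d c with rfl | hne
  · unfold label
    cases g d <;> simp
  · have : (d : ℕ) ≠ c := Fin.val_ne_of_ne hne
    rw [Fin.lt_def]
    unfold label
    split <;> simp only [hne, false_and, or_false] <;> omega

theorem card_filter_label_le {n : ℕ} (g : Fin n → Bool) (c : Fin n) :
    #{d | label g d ≤ c} = c + if g c then 0 else 1 := by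
  simp_rw [label_le_iff, filter_or]
  rw [card_union_of_disjoint]
  · congr 1
    · rw [filter_gt_eq_Iio, Fin.card_Iio]
    · cases g c <;> simp [filter_eq']
  · exact disjoint_filter.mpr fun d _ (hlt : d < c) (heq : d = c ∧ g c = false) => hlt.ne heq.1

end ThreeRows

open ThreeRows

/-- Columns are indexed from `0`: column `c` has top square (`false`) labelled `c` and bottom
square (`true`) labelled `c + 1`. -/
theorem maximal_outcome_unique (n : ℕ) (h h' : Fin n → Bool)
    (same : ∀ i : ℕ,
      (Finset.univ.filter (fun c : Fin n => (if h c then (c : ℕ) + 1 else (c : ℕ)) = i)).card =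
      (Finset.univ.filter (fun c : Fin n => (if h' c then (c : ℕ) + 1 else (c : ℕ)) = i)).card) :
    h = h' := by
  funext c
  have cumulative : #{d | label h d ≤ c} = #{d | label h' d ≤ c} := by
    rw [card_filter_le_eq_sum_card_filter_eq, card_filter_le_eq_sum_card_filter_eq]
    exact sum_congr rfl fun j _ => same j
  rw [card_filter_label_le, card_filter_label_le] at cumulative
  have top_iff := Nat.add_left_cancel cumulative
  revert top_iff
  cases h c <;> cases h' c <;> simp
end

section
/- In the Three Rows Game on n columns, a history that is a single pattern — i.e. consists of k bottom choices, then one middle choice, then n-1-k top choices, for some 0 ≤ k ≤ n-1 — has exactly n equivalent histories (including itself), and all of them are such patterns. Formally: the n histories h_k (k = 0,...,n-1) given by bottom in columns 1..k, middle in column k+1, top in columns k+2..n all yield the same outcome {1,2,...,n-1} (as a multiset), and no other history on n columns yields this outcome. -/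
/-! Label `i` is produced only by the top square of column `i` and the bottom square of column
`i - 1`. So a history has outcome `{1, …, n-1}` exactly when column `0` is not a top choice, the
last column is not a bottom choice, and for every interior label exactly one of these two squares
is chosen: a bottom choice must be followed by a bottom or middle one, and any other choice by a
top one. Such a column sequence is a run of bottoms, one middle, then tops, i.e. a pattern. -/

/-- The outcome of a history `h` of the Three Rows Game on `n` columns, as a counting
function: column `c : Fin n` has top square (`h c = 0`) labelled `c`, blank middle square
(`h c = 1`), and bottom square (`h c = 2`) labelled `c + 1`. -/
def outcome (n : ℕ) (h : Fin n → Fin 3) (i : ℕ) : ℕ :=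
  (Finset.univ.filter (fun c : Fin n => h c = 0 ∧ (c : ℕ) = i)).card +
  (Finset.univ.filter (fun c : Fin n => h c = 2 ∧ (c : ℕ) + 1 = i)).card

/-- The pattern history with `k` bottom choices, one middle choice, then top choices. -/
def pat (n k : ℕ) : Fin n → Fin 3 := fun c =>
  if (c : ℕ) < k then 2 else if (c : ℕ) = k then 1 else 0

/-- The outcome `{1, …, n-1}` (each once). -/
def tgt (n : ℕ) : ℕ → ℕ := fun i => if 1 ≤ i ∧ i < n then 1 else 0

open Finset

theorem card_filter_and_eq_of_injective {α β : Type*} [Fintype α] [DecidableEq β]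
    {f : α → β} (hf : Function.Injective f) (p : α → Prop) [DecidablePred p] (b : β) :
    #{a | p a ∧ f a = b} = if ∃ a, p a ∧ f a = b then 1 else 0 := by
  split_ifs with h
  · obtain ⟨a, ha, rfl⟩ := h
    rw [card_eq_one]
    refine ⟨a, ?_⟩
    ext a'
    simp only [mem_filter, mem_univ, true_and, mem_singleton, hf.eq_iff]
    exact ⟨And.right, fun h => ⟨h ▸ ha, h⟩⟩
  · simpa [filter_eq_empty_iff] using h

/-- Columns beyond the board are read as blank middle squares, which carry no label. -/
def padBlank {n : ℕ} (h : Fin n → Fin 3) (m : ℕ) : Fin 3 :=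
  if hm : m < n then h ⟨m, hm⟩ else 1

theorem padBlank_val {n : ℕ} (h : Fin n → Fin 3) (c : Fin n) : padBlank h c = h c :=
  dif_pos c.isLt

theorem card_filter_eq_and_val_eq {n : ℕ} (h : Fin n → Fin 3) {x : Fin 3} (hx : x ≠ 1)
    (m : ℕ) : #{c : Fin n | h c = x ∧ (c : ℕ) = m} = if padBlank h m = x then 1 else 0 := by
  rw [card_filter_and_eq_of_injective Fin.val_injective]
  congr 1
  unfold padBlank
  split_ifs with hm
  · exact propext ⟨fun ⟨c, hc, hcm⟩ => by subst hcm; exact hc, fun hx => ⟨_, hx, rfl⟩⟩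
  · exact propext ⟨fun ⟨c, _, hcm⟩ => absurd (hcm ▸ c.isLt) hm, fun h1 => absurd h1.symm hx⟩

theorem outcome_zero (n : ℕ) (h : Fin n → Fin 3) :
    outcome n h 0 = if padBlank h 0 = 0 then 1 else 0 := by
  simp [outcome, card_filter_eq_and_val_eq h (x := 0) (by decide)]

theorem outcome_succ (n : ℕ) (h : Fin n → Fin 3) (i : ℕ) :
    outcome n h (i + 1) =
      (if padBlank h (i + 1) = 0 then 1 else 0) + if padBlank h i = 2 then 1 else 0 := by
  simp only [outcome, Nat.add_right_cancel_iff, card_filter_eq_and_val_eq h (x := 0) (by decide),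
    card_filter_eq_and_val_eq h (x := 2) (by decide)]

theorem padBlank_of_le {n : ℕ} (h : Fin n → Fin 3) {m : ℕ} (hm : n ≤ m) : padBlank h m = 1 :=
  dif_neg (Nat.not_lt.2 hm)

theorem padBlank_pat (n k m : ℕ) : padBlank (pat n k) m =
    if m < n then (if m < k then 2 else if m = k then 1 else 0) else 1 := by
  unfold padBlank pat
  split_ifs <;> rfl

theorem outcome_pat {n k : ℕ} (hk : k < n) (i : ℕ) : outcome n (pat n k) i = tgt n i := by
  cases i with
  | zero => rw [outcome_zero, padBlank_pat, tgt]; split_ifs <;> omega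
  | succ i => rw [outcome_succ, padBlank_pat, padBlank_pat, tgt]; split_ifs <;> omega

theorem exists_eq_pat_of_transitions {n : ℕ} (hn : 1 ≤ n) (g : ℕ → Fin 3) (hfirst : g 0 ≠ 0)
    (hstep : ∀ i, i + 1 < n → (g (i + 1) = 0 ↔ g i ≠ 2)) (hlast : g (n - 1) ≠ 2) :
    ∃ k < n, ∀ c : Fin n, g c = pat n k c := by
  have hex : ∃ m, g m ≠ 2 := ⟨n - 1, hlast⟩
  set k := Nat.find hex
  have hk_lt : k < n := (Nat.find_min' hex hlast).trans_lt (by omega)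
  have hbelow : ∀ m < k, g m = 2 := fun m hm => not_not.1 (Nat.find_min hex hm)
  have hk : g k = 1 := by
    have hk_ne_two : g k ≠ 2 := Nat.find_spec hex
    have hk_ne_zero : g k ≠ 0 := by
      rcases Nat.eq_zero_or_eq_succ_pred k with hk0 | hk0
      · exact hk0 ▸ hfirst
      · rw [hk0]
        exact fun h => (hstep _ (hk0 ▸ hk_lt)).1 h (hbelow _ (by omega))
    omega
  have habove : ∀ m, k < m → m < n → g m = 0 := by
    intro m hkm hmn
    induction m, hkm using Nat.le_induction with
    | base => exact (hstep k hmn).2 (by rw [hk]; decide)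
    | succ m hkm ih => exact (hstep m hmn).2 (by rw [ih (by omega)]; decide)
  refine ⟨k, hk_lt, fun c => ?_⟩
  simp only [pat]
  split_ifs with hlt heq
  · exact hbelow c hlt
  · exact heq ▸ hk
  · exact habove c (by omega) c.isLt

theorem eq_pat_of_outcome_eq_tgt {n : ℕ} (hn : 1 ≤ n) (h : Fin n → Fin 3)
    (H : ∀ i, outcome n h i = tgt n i) : ∃ k < n, h = pat n k := by
  have hfirst : padBlank h 0 ≠ 0 := by
    intro h0
    simpa [outcome_zero, h0, tgt] using H 0
  have hstep (i : ℕ) (hi : i + 1 < n) : padBlank h (i + 1) = 0 ↔ padBlank h i ≠ 2 := by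
    have H' : outcome n h (i + 1) = 1 := (H (i + 1)).trans (if_pos ⟨by omega, hi⟩)
    rw [outcome_succ] at H'
    split_ifs at H' <;> simp_all
  have hlast : padBlank h (n - 1) ≠ 2 := by
    intro h2
    have H' := H (n - 1 + 1)
    rw [outcome_succ, padBlank_of_le h (by omega), h2] at H'
    simp only [tgt] at H'
    split_ifs at H' <;> simp_all
  obtain ⟨k, hk, hpat⟩ := exists_eq_pat_of_transitions hn (padBlank h) hfirst hstep hlast
  exact ⟨k, hk, funext fun c => (padBlank_val h c).symm.trans (hpat c)⟩

theorem pat_injOn (n : ℕ) : Set.InjOn (pat n) (Set.Iio n) := by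
  intro a ha b _ hab
  have hval := congrFun hab ⟨a, ha⟩
  simp only [pat] at hval
  split_ifs at hval <;> omega

/-- The `n` pattern histories `pat n k`, `0 ≤ k ≤ n-1`, all have outcome `{1,…,n-1}`,
they are the only histories with this outcome, and hence this outcome has exactly `n`
histories. -/
theorem pattern_multiplicity (n : ℕ) (hn : 1 ≤ n) :
    (∀ k < n, ∀ i, outcome n (pat n k) i = tgt n i) ∧
    (∀ h : Fin n → Fin 3, (∀ i, outcome n h i = tgt n i) → ∃ k < n, h = pat n k) ∧
    Nat.card {h : Fin n → Fin 3 // ∀ i, outcome n h i = tgt n i} = n := by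
  refine ⟨fun k hk => outcome_pat hk, eq_pat_of_outcome_eq_tgt hn, ?_⟩
  let toPat (k : Fin n) : {h : Fin n → Fin 3 // ∀ i, outcome n h i = tgt n i} :=
    ⟨pat n k, outcome_pat k.isLt⟩
  have hbij : Function.Bijective toPat := by
    refine ⟨fun a b hab => Fin.ext (pat_injOn n a.isLt b.isLt (congrArg Subtype.val hab)), ?_⟩
    rintro ⟨h, hh⟩
    obtain ⟨k, hk, rfl⟩ := eq_pat_of_outcome_eq_tgt hn h hh
    exact ⟨⟨k, hk⟩, rfl⟩
  rw [← Nat.card_congr (Equiv.ofBijective toPat hbij), Nat.card_fin]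
end

section
/- (Path Multiplicity Theorem, outcome form) Let o be an outcome of the Three Rows Game on n columns (a multiset of elements of {0,1,...,n}). A run of length k in o is a maximal set of k consecutive integers i, i+1, ..., i+k-1 ∈ {1,...,n-1}, each appearing exactly once in o, such that i-1 ∉ o and i+k ∉ o. Then the number of histories whose outcome is o equals the product over all runs r in o of (ℓ(r)+1), where ℓ(r) is the length of the run. -/
open scoped Classical

/-- `(i, k)` is a run of length `k` in the outcome `o`: the `k` consecutive integers
`i, …, i+k-1 ∈ {1,…,n-1}` each appear exactly once in `o`, while `i-1 ∉ o` and
`i+k ∉ o`. -/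
def IsRun (n : ℕ) (o : ℕ → ℕ) (i k : ℕ) : Prop :=
  1 ≤ i ∧ 1 ≤ k ∧ i + k ≤ n ∧ o (i - 1) = 0 ∧ o (i + k) = 0 ∧
    ∀ j, i ≤ j → j < i + k → o j = 1

/-- The finite set of runs of the outcome `o`, encoded as pairs (start, length). -/
noncomputable def runFinset (n : ℕ) (o : ℕ → ℕ) : Finset (ℕ × ℕ) :=
  ((Finset.Icc 1 n) ×ˢ (Finset.Icc 1 n)).filter (fun p => IsRun n o p.1 p.2)

/-!
Read the columns from left to right. A history of the first `m` columns matching `o` on the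
labels below `m` reaches label `m` at most once, through the bottom square of column `m - 1`;
let `(p, q)` count those that do not, resp. do. Adding column `m` maps `(p, q)` to `(p, p)`,
`(p + q, q)` or `(q, 0)` according as `o m = 0`, `1` or `2`. Hence, up to the factor `R`
collected from the runs closed so far, the pair is `(t + 1, 1)` after a `0` followed by `t`
ones and `(1, 0)` or `(0, 0)` otherwise; a `0` after such `t` ones closes a run of length `t`
and multiplies `R` by `t + 1`.
-/

open Finset

def openRun (o : ℕ → ℕ) : ℕ → Option ℕ
  | 0 => none
  | m + 1 => if o m = 0 then some 0 else if o m = 1 then (openRun o m).map (· + 1) else none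

theorem openRun_eq_some_iff {o : ℕ → ℕ} {m t : ℕ} :
    openRun o m = some t ↔
      t < m ∧ o (m - t - 1) = 0 ∧ ∀ j, m - t ≤ j → j < m → o j = 1 := by
  induction m generalizing t with
  | zero => simp [openRun]
  | succ m ih =>
    rw [openRun]
    split_ifs with h0 h1
    · constructor
      · rintro ⟨⟩
        exact ⟨by omega, by simpa using h0, fun j hj hjm => by omega⟩
      · rintro ⟨-, -, hones⟩
        rcases t with _ | t
        · rfl
        · exact absurd (hones m (by omega) (by omega)) (by omega)
    · cases t with
      | zero => simp [h1]
      | succ t =>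
        simp only [Option.map_eq_some_iff, ih, Nat.add_right_cancel_iff, exists_eq_right]
        constructor
        · rintro ⟨ht, hz, hones⟩
          refine ⟨by omega, by rwa [show m + 1 - (t + 1) - 1 = m - t - 1 by omega],
            fun j hj hjm => ?_⟩
          rcases Nat.lt_or_ge j m with hj' | hj'
          · exact hones j (by omega) hj'
          · rwa [show j = m by omega]
        · rintro ⟨ht, hz, hones⟩
          exact ⟨by omega, by rwa [show m + 1 - (t + 1) - 1 = m - t - 1 by omega] at hz,
            fun j hj hjm => hones j (by omega) (by omega)⟩
    · simp only [false_iff]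
      rintro ⟨ht, hz, hones⟩
      rcases t with _ | t
      · exact h0 hz
      · exact h1 (hones m (by omega) (by omega))

theorem mem_runFinset {n : ℕ} {o : ℕ → ℕ} {p : ℕ × ℕ} :
    p ∈ runFinset n o ↔ IsRun n o p.1 p.2 := by
  simp only [runFinset, mem_filter, mem_product, mem_Icc, and_iff_right_iff_imp]
  rintro ⟨hi, hk, hik, -⟩
  omega

theorem isRun_succ_iff_of_le {m i k : ℕ} {o : ℕ → ℕ} (hik : i + k ≤ m) :
    IsRun (m + 1) o i k ↔ IsRun m o i k := by
  unfold IsRun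
  constructor <;> rintro ⟨h1, h2, -, h4⟩ <;> exact ⟨h1, h2, by omega, h4⟩

theorem isRun_succ_iff_of_lt {m i k : ℕ} {o : ℕ → ℕ} (hik : m < i + k) :
    IsRun (m + 1) o i k ↔
      o (m + 1) = 0 ∧ 1 ≤ k ∧ openRun o (m + 1) = some k ∧ i + k = m + 1 := by
  rw [openRun_eq_some_iff]
  constructor
  · rintro ⟨hi, hk, hikm, hl, hr, hones⟩
    obtain rfl : i = m + 1 - k := by omega
    rw [Nat.sub_add_cancel (by omega)] at hr
    exact ⟨hr, hk, ⟨by omega, hl, fun j hj hjm => hones j hj (by omega)⟩, by omega⟩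
  · rintro ⟨hr, hk, ⟨hkm, hl, hones⟩, hikm⟩
    obtain rfl : i = m + 1 - k := by omega
    refine ⟨by omega, hk, by omega, hl, by rwa [hikm], fun j hj hjm => hones j hj (by omega)⟩

noncomputable def runProd (n : ℕ) (o : ℕ → ℕ) : ℕ := ∏ p ∈ runFinset n o, (p.2 + 1)

theorem filter_runFinset_succ_le (m : ℕ) (o : ℕ → ℕ) :
    {p ∈ runFinset (m + 1) o | p.1 + p.2 ≤ m} = runFinset m o := by
  ext ⟨i, k⟩
  simp only [mem_filter, mem_runFinset]
  constructor
  · rintro ⟨hr, hik⟩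
    exact (isRun_succ_iff_of_le hik).1 hr
  · intro hr
    exact ⟨(isRun_succ_iff_of_le hr.2.2.1).2 hr, hr.2.2.1⟩

theorem prod_filter_runFinset_succ_not_le (m : ℕ) (o : ℕ → ℕ) :
    ∏ p ∈ runFinset (m + 1) o with ¬ p.1 + p.2 ≤ m, (p.2 + 1) =
      if o (m + 1) = 0 then (openRun o (m + 1)).elim 1 (· + 1) else 1 := by
  by_cases hnew : o (m + 1) = 0 ∧ ∃ k, 1 ≤ k ∧ openRun o (m + 1) = some k
  · obtain ⟨h0, k, hk, hopen⟩ := hnew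
    have hkm := (openRun_eq_some_iff.1 hopen).1
    have : {p ∈ runFinset (m + 1) o | ¬ p.1 + p.2 ≤ m} = {(m + 1 - k, k)} := by
      ext ⟨i, l⟩
      simp only [mem_filter, mem_runFinset, mem_singleton, Prod.mk.injEq, not_le]
      constructor
      · rintro ⟨hr, hil⟩
        obtain ⟨-, -, hl, hil'⟩ := (isRun_succ_iff_of_lt hil).1 hr
        rw [hopen, Option.some_inj] at hl
        omega
      · rintro ⟨rfl, rfl⟩
        exact ⟨(isRun_succ_iff_of_lt (by omega)).2 ⟨h0, hk, hopen, by omega⟩, by omega⟩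
    rw [this, prod_singleton, if_pos h0, hopen]
    rfl
  · have : {p ∈ runFinset (m + 1) o | ¬ p.1 + p.2 ≤ m} = ∅ := by
      ext ⟨i, l⟩
      simp only [mem_filter, mem_runFinset, not_le, notMem_empty, iff_false, not_and]
      intro hr hil
      obtain ⟨h0, hl, hopen, -⟩ := (isRun_succ_iff_of_lt hil).1 hr
      exact hnew ⟨h0, l, hl, hopen⟩
    rw [this, prod_empty]
    split_ifs with h0
    · rcases hopen : openRun o (m + 1) with _ | k
      · rfl
      · have : k = 0 := by by_contra hk; exact hnew ⟨h0, k, by omega, hopen⟩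
        simp [this]
    · rfl

theorem runProd_eq_runProd_pred_mul (m : ℕ) (o : ℕ → ℕ) :
    runProd m o = runProd (m - 1) o * if o m = 0 then (openRun o m).elim 1 (· + 1) else 1 := by
  cases m with
  | zero => simp [openRun]
  | succ m =>
    rw [runProd, ← prod_filter_mul_prod_filter_not _ (fun p => p.1 + p.2 ≤ m),
      filter_runFinset_succ_le, prod_filter_runFinset_succ_not_le, Nat.add_sub_cancel, runProd]

theorem outcome_eq_sum (n : ℕ) (h : Fin n → Fin 3) (i : ℕ) :
    outcome n h i = ∑ c : Fin n,
      ((if h c = 0 ∧ (c : ℕ) = i then 1 else 0) +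
        if h c = 2 ∧ (c : ℕ) + 1 = i then 1 else 0) := by
  rw [outcome, card_filter, card_filter, sum_add_distrib]

theorem outcome_snoc (m : ℕ) (h : Fin m → Fin 3) (a : Fin 3) (i : ℕ) :
    outcome (m + 1) (Fin.snoc h a) i =
      outcome m h i +
        ((if a = 0 ∧ m = i then 1 else 0) + if a = 2 ∧ m + 1 = i then 1 else 0) := by
  simp only [outcome_eq_sum, Fin.sum_univ_castSucc, Fin.snoc_castSucc, Fin.snoc_last,
    Fin.val_castSucc, Fin.val_last]

theorem outcome_of_lt {n i : ℕ} (h : Fin n → Fin 3) (hi : n < i) : outcome n h i = 0 := by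
  rw [outcome_eq_sum]
  refine sum_eq_zero fun c _ => ?_
  have := c.isLt
  rw [if_neg (by omega), if_neg (by omega), add_zero]

theorem outcome_self_le_one (n : ℕ) (h : Fin n → Fin 3) : outcome n h n ≤ 1 := by
  cases n with
  | zero => simp [outcome_eq_sum]
  | succ m =>
    rw [← Fin.snoc_init_self h, outcome_snoc, outcome_of_lt _ (by omega)]
    split_ifs <;> omega

noncomputable def prefixCount (m : ℕ) (o : ℕ → ℕ) (c : ℕ) : ℕ :=
  #{h : Fin m → Fin 3 | (∀ i < m, outcome m h i = o i) ∧ outcome m h m = c}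

theorem prefixCount_of_two_le {m c : ℕ} (o : ℕ → ℕ) (hc : 2 ≤ c) :
    prefixCount m o c = 0 := by
  rw [prefixCount, card_eq_zero, filter_eq_empty_iff]
  rintro h - ⟨-, hh⟩
  have := outcome_self_le_one m h
  omega

theorem prefixCount_succ (m : ℕ) (o : ℕ → ℕ) (c : ℕ) :
    prefixCount (m + 1) o c = ∑ a : Fin 3,
      #{h : Fin m → Fin 3 | (∀ i < m, outcome m h i = o i) ∧
        outcome m h m + (if a = 0 then 1 else 0) = o m ∧ (if a = 2 then 1 else 0) = c} := by
  have hsnoc : ∀ (h : Fin m → Fin 3) (a : Fin 3),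
      ((∀ i < m + 1, outcome (m + 1) (Fin.snoc h a) i = o i) ∧
        outcome (m + 1) (Fin.snoc h a) (m + 1) = c) ↔
      (∀ i < m, outcome m h i = o i) ∧ outcome m h m + (if a = 0 then 1 else 0) = o m ∧
        (if a = 2 then 1 else 0) = c := by
    intro h a
    have hlow : ∀ i < m, outcome (m + 1) (Fin.snoc h a) i = outcome m h i := fun i hi => by
      rw [outcome_snoc, if_neg fun hc => absurd hc.2 (by omega),
        if_neg fun hc => absurd hc.2 (by omega), add_zero, add_zero]
    rw [Nat.forall_lt_succ_right, and_assoc]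
    refine and_congr (forall₂_congr fun i hi => by rw [hlow i hi]) ?_
    simp [outcome_snoc, outcome_of_lt h (Nat.lt_succ_self m)]
  rw [prefixCount, card_filter, ← (Fin.snocEquiv fun _ => Fin 3).sum_comp, Fintype.sum_prod_type]
  simp only [card_filter]
  exact sum_congr rfl fun a _ => sum_congr rfl fun h _ => if_congr (hsnoc h a) rfl rfl

theorem prefixCount_succ_one (m : ℕ) (o : ℕ → ℕ) :
    prefixCount (m + 1) o 1 = prefixCount m o (o m) := by
  rw [prefixCount_succ, Fin.sum_univ_three]
  simp [prefixCount]

theorem prefixCount_succ_zero (m : ℕ) (o : ℕ → ℕ) :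
    prefixCount (m + 1) o 0 =
      prefixCount m o (o m) + if o m = 0 then 0 else prefixCount m o (o m - 1) := by
  rw [prefixCount_succ, Fin.sum_univ_three]
  simp only [Fin.isValue, ↓reduceIte, Fin.reduceEq, and_true, one_ne_zero, add_zero, and_false,
    filter_false, card_empty, prefixCount]
  rw [add_comm]
  congr 1
  split_ifs with h0
  · simp [h0]
  · congr 1
    ext h
    simp only [mem_filter, mem_univ, true_and]
    exact and_congr_right fun _ => by omega

theorem prefixCount_eq_zero_or_eq_runProd (o : ℕ → ℕ) (m : ℕ) :
    (prefixCount m o 0 = 0 ∧ prefixCount m o 1 = 0) ∨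
    (prefixCount m o 0 = runProd (m - 1) o * (openRun o m).elim 1 (· + 1) ∧
      prefixCount m o 1 = if (openRun o m).isSome then runProd (m - 1) o else 0) := by
  induction m with
  | zero => right; simp [prefixCount, outcome_eq_sum, openRun, runProd, runFinset]
  | succ m ih =>
    rw [prefixCount_succ_zero, prefixCount_succ_one, Nat.add_sub_cancel,
      runProd_eq_runProd_pred_mul m o]
    obtain h | h | h | h : o m = 0 ∨ o m = 1 ∨ o m = 2 ∨ 3 ≤ o m := by omega
    · rcases ih with ⟨h0, -⟩ | ⟨h0, -⟩ <;> simp [openRun, h, h0]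
    · rcases ih with ⟨h0, h1⟩ | ⟨h0, h1⟩
      · simp [h, h0, h1]
      · rcases hrun : openRun o m with _ | t
        · simp [openRun, h, h0, h1, hrun]
        · refine Or.inr ⟨?_, by simp [openRun, h, h1, hrun]⟩
          simp only [openRun, h, h0, h1, hrun, Option.isSome_some, Option.elim_some,
            Option.map_some, ↓reduceIte, one_ne_zero, tsub_self, mul_one]
          ring
    · have h2 : prefixCount m o 2 = 0 := prefixCount_of_two_le o le_rfl
      rcases ih with ⟨-, h1⟩ | ⟨-, h1⟩
      · simp [h, h1, h2]
      · rcases hrun : openRun o m with _ | t <;> simp [openRun, h, h1, h2, hrun]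
    · left
      simp [prefixCount_of_two_le o (show 2 ≤ o m by omega),
        prefixCount_of_two_le o (show 2 ≤ o m - 1 by omega)]

theorem card_eq_prefixCount {n : ℕ} {o : ℕ → ℕ} (ho : ∀ i, n < i → o i = 0) :
    Nat.card {h : Fin n → Fin 3 // ∀ i, outcome n h i = o i} = prefixCount n o (o n) := by
  rw [Nat.card_eq_fintype_card, Fintype.card_subtype, prefixCount]
  congr 1
  ext h
  simp only [mem_filter, mem_univ, true_and]
  refine ⟨fun hh => ⟨fun i _ => hh i, hh n⟩, fun ⟨hlt, hn⟩ i => ?_⟩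
  rcases lt_trichotomy i n with hi | rfl | hi
  · exact hlt i hi
  · exact hn
  · rw [outcome_of_lt h hi, ho i hi]

/-- Path Multiplicity Theorem (outcome form): the number of histories of the Three Rows
Game on `n` columns with outcome `o` is the product over the runs `r` of `o` of
`ℓ(r) + 1`. -/
theorem path_multiplicity (n : ℕ) (o : ℕ → ℕ)
    (hex : ∃ h : Fin n → Fin 3, ∀ i, outcome n h i = o i) :
    Nat.card {h : Fin n → Fin 3 // ∀ i, outcome n h i = o i} =
      ∏ p ∈ runFinset n o, (p.2 + 1) := by
  obtain ⟨h₀, hh₀⟩ := hex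
  have hcard := card_eq_prefixCount fun i hi => (hh₀ i).symm.trans (outcome_of_lt h₀ hi)
  have hpos : 0 < prefixCount n o (o n) := by
    have : Nonempty {h : Fin n → Fin 3 // ∀ i, outcome n h i = o i} := ⟨⟨h₀, hh₀⟩⟩
    exact hcard ▸ Nat.card_pos
  have hon : o n ≤ 1 := hh₀ n ▸ outcome_self_le_one n h₀
  rw [hcard, ← runProd, runProd_eq_runProd_pred_mul]
  obtain hn | hn : o n = 0 ∨ o n = 1 := by omega
  all_goals
    rw [hn] at hpos ⊢
    rcases prefixCount_eq_zero_or_eq_runProd o n with ⟨h0, h1⟩ | ⟨h0, h1⟩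
  · omega
  · simp [h0]
  · omega
  · rcases hrun : openRun o n with _ | t <;> simp_all
end
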